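/- arXiv:2601.04454 — 2 statements merged into one kernel-verified Lean document; each statement's English description precedes it below -/
import Mathlib

section
/- With M^{(n)} the pentadiagonal Toeplitz family (diagonals e,d,a,b,c), for sufficiently large n: det((1,2;3,4)M^{(n)}) = e·det((1,2;2,3)M^{(n−1)}) = e²·G_{n−4}, combining the first-column expansion (first column of (1,2;3,4)M^{(n)} has single nonzero entry e) with the identification (1,2,3;1,3,4)M^{(n)} = (1,2;2,3)M^{(n−1)}. -/
/-- The `n × n` pentadiagonal Toeplitz matrix with diagonal `a`, first and second
superdiagonals `b, c`, and first and second subdiagonals `d, e`. -/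
def Mp {K : Type*} [CommRing K] (a b c d e : K) (n : ℕ) : Matrix (Fin n) (Fin n) K :=
  Matrix.of fun i j =>
    if (i : ℕ) = (j : ℕ) then a
    else if (j : ℕ) = (i : ℕ) + 1 then b
    else if (j : ℕ) = (i : ℕ) + 2 then c
    else if (i : ℕ) = (j : ℕ) + 1 then d
    else if (i : ℕ) = (j : ℕ) + 2 then e
    else 0

/-- `G n` is the determinant of the `n × n` pentadiagonal Toeplitz matrix. -/
def G {K : Type*} [CommRing K] (a b c d e : K) (n : ℕ) : K := (Mp a b c d e n).det

/-- The embedding `Fin k → Fin (k + 2)` whose image omits the (0-based) indices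
`p < q`: it enumerates the complement of `{p, q}` in increasing order. -/
def skip2 (p q : ℕ) {k : ℕ} : Fin k → Fin (k + 2) := fun j =>
  if h : (j : ℕ) < p then ⟨j, by omega⟩
  else if h' : (j : ℕ) + 1 < q then ⟨(j : ℕ) + 1, by have := j.isLt; omega⟩
  else ⟨(j : ℕ) + 2, by have := j.isLt; omega⟩

/-- Nat-level entry function of the pentadiagonal matrix. -/
def mpf {K : Type*} [CommRing K] (a b c d e : K) (i j : ℕ) : K :=
  if i = j then a
  else if j = i + 1 then b
  else if j = i + 2 then c
  else if i = j + 1 then d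
  else if i = j + 2 then e
  else 0

lemma Mp_apply {K : Type*} [CommRing K] (a b c d e : K) (n : ℕ) (i j : Fin n) :
    Mp a b c d e n i j = mpf a b c d e (i : ℕ) (j : ℕ) := rfl

lemma mpf_congr {K : Type*} [CommRing K] (a b c d e : K) {r1 c1 r2 c2 : ℕ}
    (h : r1 + c2 = r2 + c1) :
    mpf a b c d e r1 c1 = mpf a b c d e r2 c2 := by
  unfold mpf
  split_ifs <;> first | rfl | omega

lemma skip2_01 {k : ℕ} (j : Fin k) : ((skip2 0 1 j : Fin (k + 2)) : ℕ) = (j : ℕ) + 2 := by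
  simp [skip2]

lemma skip2_12 {k : ℕ} (j : Fin k) :
    ((skip2 1 2 j : Fin (k + 2)) : ℕ) = if (j : ℕ) < 1 then (j : ℕ) else (j : ℕ) + 2 := by
  simp only [skip2]
  split_ifs <;> simp; omega

lemma skip2_23 {k : ℕ} (j : Fin k) :
    ((skip2 2 3 j : Fin (k + 2)) : ℕ) = if (j : ℕ) < 2 then (j : ℕ) else (j : ℕ) + 2 := by
  simp only [skip2]
  split_ifs <;> simp; omega

/-- Reduction of `(1,2;3,4) M⁽ⁿ⁾` (`n = m + 4`):
`det((1,2;3,4) M⁽ⁿ⁾) = e · det((1,2;2,3) M⁽ⁿ⁻¹⁾) = e² · G (n-4)`. -/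
theorem stmt_12 {K : Type*} [CommRing K] (a b c d e : K) (m : ℕ) :
    ((Mp a b c d e (m + 4)).submatrix (skip2 0 1) (skip2 2 3)).det
      = e * ((Mp a b c d e (m + 3)).submatrix (skip2 0 1) (skip2 1 2)).det ∧
    ((Mp a b c d e (m + 4)).submatrix (skip2 0 1) (skip2 2 3)).det
      = e ^ 2 * G a b c d e m := by
  have hA : ((Mp a b c d e (m + 4)).submatrix (skip2 0 1) (skip2 2 3)).det
      = e * ((Mp a b c d e (m + 3)).submatrix (skip2 0 1) (skip2 1 2)).det := by
    rw [Matrix.det_succ_column_zero]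
    rw [Finset.sum_eq_single 0]
    · have h0 : (Mp a b c d e (m + 4)).submatrix (skip2 0 1) (skip2 2 3) 0 0 = e := by
        rw [Matrix.submatrix_apply, Mp_apply, skip2_01, skip2_23]
        simp [mpf]
      have hmin : (((Mp a b c d e (m + 4)).submatrix (skip2 0 1) (skip2 2 3)).submatrix
          (Fin.succAbove 0) Fin.succ)
          = (Mp a b c d e (m + 3)).submatrix (skip2 0 1) (skip2 1 2) := by
        ext i j
        simp only [Matrix.submatrix_apply, Mp_apply]
        apply mpf_congr
        rw [skip2_01, skip2_01, skip2_23, skip2_12, Fin.zero_succAbove, Fin.val_succ,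
          Fin.val_succ]
        split_ifs <;> omega
      rw [h0, hmin]
      simp
    · intro i _ hi
      have hz : (Mp a b c d e (m + 4)).submatrix (skip2 0 1) (skip2 2 3) i 0 = 0 := by
        rw [Matrix.submatrix_apply, Mp_apply, skip2_01, skip2_23]
        have hpos : 0 < @Fin.val (m + 2) i := Nat.pos_of_ne_zero (fun h => hi (Fin.ext h))
        norm_num
        unfold mpf
        split_ifs <;> first | rfl | omega | simp_all
      rw [hz]; ring
    · simp
  have hB : ((Mp a b c d e (m + 3)).submatrix (skip2 0 1) (skip2 1 2)).det
      = e * G a b c d e m := by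
    rw [Matrix.det_succ_column_zero]
    rw [Finset.sum_eq_single 0]
    · have h0 : (Mp a b c d e (m + 3)).submatrix (skip2 0 1) (skip2 1 2) 0 0 = e := by
        rw [Matrix.submatrix_apply, Mp_apply, skip2_01, skip2_12]
        simp [mpf]
      have hmin : (((Mp a b c d e (m + 3)).submatrix (skip2 0 1) (skip2 1 2)).submatrix
          (Fin.succAbove 0) Fin.succ)
          = Mp a b c d e m := by
        ext i j
        simp only [Matrix.submatrix_apply, Mp_apply]
        apply mpf_congr
        rw [skip2_01, skip2_12, Fin.zero_succAbove, Fin.val_succ, Fin.val_succ]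
        split_ifs <;> omega
      rw [h0, hmin]
      simp [G]
    · intro i _ hi
      have hz : (Mp a b c d e (m + 3)).submatrix (skip2 0 1) (skip2 1 2) i 0 = 0 := by
        rw [Matrix.submatrix_apply, Mp_apply, skip2_01, skip2_12]
        have hpos : 0 < @Fin.val (m + 1) i := Nat.pos_of_ne_zero (fun h => hi (Fin.ext h))
        norm_num
        unfold mpf
        split_ifs <;> first | rfl | omega | simp_all
      rw [hz]; ring
    · simp
  exact ⟨hA, by rw [hA, hB]; ring⟩
end

section
/- Let a, b, c, d, e be elements of a commutative ring and let G_n be the determinant of the n×n pentadiagonal Toeplitz matrix (diagonals e, d, a, b, c). Define the polynomial χ(x) = x⁶ − a x⁵ + (bd − ce) x⁴ + (2ace − b²e − cd²) x³ + ce(bd − ce) x² − ac²e² x + c³e³. Then the sequence (G_n) is annihilated by χ(y⁻¹)-shift: for all n ≥ 7, Σ over the seven coefficients gives zero; equivalently, the generating identity holds: (1 − a y + (bd−ce) y² + (2ace − b²e − cd²) y³ + ce(bd−ce) y⁴ − ac²e² y⁵ + c³e³ y⁶) applied to (G_n) (with y the backward shift y G_n = G_{n−1}) is the zero sequence for n ≥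 7. -/
set_option maxHeartbeats 1000000
set_option linter.unreachableTactic false
set_option linter.unusedTactic false

/-- The backward shift operator on sequences: `(Y s) n = s (n - 1)`. -/
def Y {K : Type*} (s : ℕ → K) : ℕ → K := fun n => s (n - 1)

section PentAux

lemma coe_succAbove' {n : ℕ} (p : Fin (n+1)) (i : Fin n) :
    ((p.succAbove i : Fin (n+1)) : ℕ) = if (i:ℕ) < (p:ℕ) then (i:ℕ) else (i:ℕ)+1 := by
  rw [Fin.succAbove]
  split_ifs with h h1 h2 <;> simp_all [Fin.lt_def, Fin.castSucc, Fin.castAdd, Fin.castLE]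

variable {K : Type*} [CommRing K] (a b c d e : K)

def t (i j : ℕ) : K :=
  if i = j then a else if j = i + 1 then b else if j = i + 2 then c
  else if i = j + 1 then d else if i = j + 2 then e else 0

lemma t_ss (i j : ℕ) : t a b c d e (i+1) (j+1) = t a b c d e i j := by
  unfold t; all_goals first | rfl | (split_ifs <;> first | rfl | (exfalso; first | assumption | omega))

lemma t_0s (j : ℕ) : t a b c d e 0 (j+1) = if j = 0 then b else if j = 1 then c else 0 := by
  unfold t; all_goals first | rfl | (split_ifs <;> first | rfl | (exfalso; first | assumption | omega))

lemma t_s0 (i : ℕ) : t a b c d e (i+1) 0 = if i = 0 then d else if i = 1 then e else 0 := by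
  unfold t; all_goals first | rfl | (split_ifs <;> first | rfl | (exfalso; first | assumption | omega))

lemma t_1s (j : ℕ) : t a b c d e 1 (j+1) = t a b c d e 0 j := by
  have := t_ss a b c d e 0 j; simpa using this

lemma t00 : t a b c d e 0 0 = a := by
  unfold t; all_goals first | rfl | (split_ifs <;> first | rfl | (exfalso; first | assumption | omega))

def Mpp (n : ℕ) : Matrix (Fin n) (Fin n) K := Matrix.of fun i j => t a b c d e i j

def PM (n : ℕ) : Matrix (Fin n) (Fin n) K := Matrix.of fun i j =>
  if (i:ℕ) = 0 then (if (j:ℕ) = 0 then b else if (j:ℕ) = 1 then c else 0) else t a b c d e i j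

def ZM (n : ℕ) : Matrix (Fin n) (Fin n) K := Matrix.of fun i j =>
  if (j:ℕ) = 0 then (if (i:ℕ) = 0 then d else if (i:ℕ) = 1 then e else 0) else t a b c d e i j

def YM (n : ℕ) : Matrix (Fin n) (Fin n) K := Matrix.of fun i j =>
  if (i:ℕ) = 0 then (if (j:ℕ) = 0 then b else if (j:ℕ) = 1 then c else 0)
  else if (i:ℕ) = 1 then t a b c d e 0 j else t a b c d e i j

def WM (n : ℕ) : Matrix (Fin n) (Fin n) K := Matrix.of fun i j =>
  if (i:ℕ) = 0 then (if (j:ℕ) = 0 then a else if (j:ℕ) = 1 then c else 0)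
  else if (j:ℕ) = 0 then (if (i:ℕ) = 1 then e else 0) else t a b c d e i j

def VM (n : ℕ) : Matrix (Fin n) (Fin n) K := Matrix.of fun i j =>
  if (j:ℕ) = 0 then (if (i:ℕ) = 0 then e else 0) else t a b c d e i j

/-! ### Minor identifications -/

lemma subA0 (n : ℕ) (p : Fin (n+3)) (hp : (p:ℕ) = 0) :
    (Mpp a b c d e (n+3)).submatrix p.succAbove Fin.succ = Mpp a b c d e (n+2) := by
  ext i j
  have hs := coe_succAbove' p i; rw [hp] at hs
  simp only [Matrix.submatrix_apply, Mpp, Matrix.of_apply, Fin.val_succ, hs]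
  rw [if_neg (by omega : ¬ (i:ℕ) < 0), t_ss]

lemma subA1 (n : ℕ) (p : Fin (n+3)) (hp : (p:ℕ) = 1) :
    (Mpp a b c d e (n+3)).submatrix p.succAbove Fin.succ = PM a b c d e (n+2) := by
  ext i j
  have hs := coe_succAbove' p i; rw [hp] at hs
  simp only [Matrix.submatrix_apply, Mpp, PM, Matrix.of_apply, Fin.val_succ, hs]
  rcases Nat.lt_or_ge (i:ℕ) 1 with hi | hi
  · have h0 : (i:ℕ) = 0 := by omega
    rw [if_pos hi, h0]
    simp only [t_ss, t_0s, t_s0, t_1s, t00]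
    all_goals first | rfl | (split_ifs <;> first | rfl | (exfalso; first | assumption | omega))
  · rw [if_neg (by omega : ¬ (i:ℕ) < 1)]
    simp only [t_ss, t_0s, t_s0, t_1s, t00]
    all_goals first | rfl | (split_ifs <;> first | rfl | (exfalso; first | assumption | omega))

lemma subA2 (n : ℕ) (p : Fin (n+3)) (hp : (p:ℕ) = 2) :
    (Mpp a b c d e (n+3)).submatrix p.succAbove Fin.succ = YM a b c d e (n+2) := by
  ext i j
  have hs := coe_succAbove' p i; rw [hp] at hs
  simp only [Matrix.submatrix_apply, Mpp, YM, Matrix.of_apply, Fin.val_succ, hs]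
  rcases Nat.lt_or_ge (i:ℕ) 2 with hi | hi
  · rw [if_pos hi]
    rcases (by omega : (i:ℕ) = 0 ∨ (i:ℕ) = 1) with h0 | h1
    · rw [h0]
      simp only [t_ss, t_0s, t_s0, t_1s, t00]
      all_goals first | rfl | (split_ifs <;> first | rfl | (exfalso; first | assumption | omega))
    · rw [h1]
      simp only [t_ss, t_0s, t_s0, t_1s, t00]
      all_goals first | rfl | (split_ifs <;> first | rfl | (exfalso; first | assumption | omega))
  · rw [if_neg (by omega : ¬ (i:ℕ) < 2)]
    simp only [t_ss, t_0s, t_s0, t_1s, t00]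
    all_goals first | rfl | (split_ifs <;> first | rfl | (exfalso; first | assumption | omega))

lemma subP0 (n : ℕ) (q : Fin (n+3)) (hq : (q:ℕ) = 0) :
    (PM a b c d e (n+3)).submatrix Fin.succ q.succAbove = Mpp a b c d e (n+2) := by
  ext i j
  have hs := coe_succAbove' q j; rw [hq] at hs
  simp only [Matrix.submatrix_apply, Mpp, PM, Matrix.of_apply, Fin.val_succ, hs]
  rw [if_neg (by omega : ¬ (j:ℕ) < 0), if_neg (by omega : ¬ ((i:ℕ)+1 = 0)), t_ss]

lemma subP1 (n : ℕ) (q : Fin (n+3)) (hq : (q:ℕ) = 1) :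
    (PM a b c d e (n+3)).submatrix Fin.succ q.succAbove = ZM a b c d e (n+2) := by
  ext i j
  have hs := coe_succAbove' q j; rw [hq] at hs
  simp only [Matrix.submatrix_apply, ZM, PM, Matrix.of_apply, Fin.val_succ, hs]
  rw [if_neg (by omega : ¬ ((i:ℕ)+1 = 0))]
  rcases Nat.lt_or_ge (j:ℕ) 1 with hj | hj
  · have h0 : (j:ℕ) = 0 := by omega
    rw [if_pos hj, h0]
    simp only [t_ss, t_0s, t_s0, t_1s, t00]
    all_goals first | rfl | (split_ifs <;> first | rfl | (exfalso; first | assumption | omega))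
  · rw [if_neg (by omega : ¬ (j:ℕ) < 1)]
    simp only [t_ss, t_0s, t_s0, t_1s, t00]
    all_goals first | rfl | (split_ifs <;> first | rfl | (exfalso; first | assumption | omega))

lemma subZ0 (n : ℕ) (p : Fin (n+2)) (hp : (p:ℕ) = 0) :
    (ZM a b c d e (n+2)).submatrix p.succAbove Fin.succ = Mpp a b c d e (n+1) := by
  ext i j
  have hs := coe_succAbove' p i; rw [hp] at hs
  simp only [Matrix.submatrix_apply, Mpp, ZM, Matrix.of_apply, Fin.val_succ, hs]
  rw [if_neg (by omega : ¬ (i:ℕ) < 0), if_neg (by omega : ¬ ((j:ℕ)+1 = 0)), t_ss]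

lemma subZ1 (n : ℕ) (p : Fin (n+2)) (hp : (p:ℕ) = 1) :
    (ZM a b c d e (n+2)).submatrix p.succAbove Fin.succ = PM a b c d e (n+1) := by
  ext i j
  have hs := coe_succAbove' p i; rw [hp] at hs
  simp only [Matrix.submatrix_apply, PM, ZM, Matrix.of_apply, Fin.val_succ, hs]
  rw [if_neg (by omega : ¬ ((j:ℕ)+1 = 0))]
  rcases Nat.lt_or_ge (i:ℕ) 1 with hi | hi
  · have h0 : (i:ℕ) = 0 := by omega
    rw [if_pos hi, h0]
    simp only [t_ss, t_0s, t_s0, t_1s, t00]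
    all_goals first | rfl | (split_ifs <;> first | rfl | (exfalso; first | assumption | omega))
  · rw [if_neg (by omega : ¬ (i:ℕ) < 1)]
    simp only [t_ss, t_0s, t_s0, t_1s, t00]
    all_goals first | rfl | (split_ifs <;> first | rfl | (exfalso; first | assumption | omega))

lemma subY0 (n : ℕ) (q : Fin (n+2)) (hq : (q:ℕ) = 0) :
    (YM a b c d e (n+2)).submatrix Fin.succ q.succAbove = PM a b c d e (n+1) := by
  ext i j
  have hs := coe_succAbove' q j; rw [hq] at hs
  simp only [Matrix.submatrix_apply, YM, PM, Matrix.of_apply, Fin.val_succ, hs]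
  rw [if_neg (by omega : ¬ (j:ℕ) < 0), if_neg (by omega : ¬ ((i:ℕ)+1 = 0))]
  rcases (by omega : (i:ℕ) = 0 ∨ 1 ≤ (i:ℕ)) with h0 | h1
  · rw [h0]
    simp only [t_ss, t_0s, t_s0, t_1s, t00]
    all_goals first | rfl | (split_ifs <;> first | rfl | (exfalso; first | assumption | omega))
  · rw [if_neg (by omega : ¬ ((i:ℕ)+1 = 1)), if_neg (by omega : ¬ (i:ℕ) = 0)]
    simp only [t_ss, t_0s, t_s0, t_1s, t00]
    all_goals first | rfl | (split_ifs <;> first | rfl | (exfalso; first | assumption | omega))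

lemma subY1 (n : ℕ) (q : Fin (n+2)) (hq : (q:ℕ) = 1) :
    (YM a b c d e (n+2)).submatrix Fin.succ q.succAbove = WM a b c d e (n+1) := by
  ext i j
  have hs := coe_succAbove' q j; rw [hq] at hs
  simp only [Matrix.submatrix_apply, YM, WM, Matrix.of_apply, Fin.val_succ, hs]
  rw [if_neg (by omega : ¬ ((i:ℕ)+1 = 0))]
  rcases Nat.lt_or_ge (j:ℕ) 1 with hj | hj
  · have hj0 : (j:ℕ) = 0 := by omega
    rw [if_pos hj, hj0]
    rcases (by omega : (i:ℕ) = 0 ∨ 1 ≤ (i:ℕ)) with h0 | h1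
    · rw [h0]
      simp only [t_ss, t_0s, t_s0, t_1s, t00]
      all_goals first | rfl | (split_ifs <;> first | rfl | (exfalso; first | assumption | omega))
    · rw [if_neg (by omega : ¬ ((i:ℕ)+1 = 1)), if_neg (by omega : ¬ (i:ℕ) = 0)]
      simp only [t_ss, t_0s, t_s0, t_1s, t00]
      all_goals first | rfl | (split_ifs <;> first | rfl | (exfalso; first | assumption | omega))
  · rw [if_neg (by omega : ¬ (j:ℕ) < 1)]
    rcases (by omega : (i:ℕ) = 0 ∨ 1 ≤ (i:ℕ)) with h0 | h1
    · rw [h0]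
      simp only [t_ss, t_0s, t_s0, t_1s, t00]
      all_goals first | rfl | (split_ifs <;> first | rfl | (exfalso; first | assumption | omega))
    · rw [if_neg (by omega : ¬ ((i:ℕ)+1 = 1)), if_neg (by omega : ¬ (i:ℕ) = 0)]
      simp only [t_ss, t_0s, t_s0, t_1s, t00]
      all_goals first | rfl | (split_ifs <;> first | rfl | (exfalso; first | assumption | omega))

lemma subW0 (n : ℕ) (q : Fin (n+2)) (hq : (q:ℕ) = 0) :
    (WM a b c d e (n+2)).submatrix Fin.succ q.succAbove = Mpp a b c d e (n+1) := by
  ext i j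
  have hs := coe_succAbove' q j; rw [hq] at hs
  simp only [Matrix.submatrix_apply, WM, Mpp, Matrix.of_apply, Fin.val_succ, hs]
  rw [if_neg (by omega : ¬ (j:ℕ) < 0), if_neg (by omega : ¬ ((i:ℕ)+1 = 0)),
    if_neg (by omega : ¬ ((j:ℕ)+1 = 0)), t_ss]

lemma subW1 (n : ℕ) (q : Fin (n+2)) (hq : (q:ℕ) = 1) :
    (WM a b c d e (n+2)).submatrix Fin.succ q.succAbove = VM a b c d e (n+1) := by
  ext i j
  have hs := coe_succAbove' q j; rw [hq] at hs
  simp only [Matrix.submatrix_apply, WM, VM, Matrix.of_apply, Fin.val_succ, hs]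
  rw [if_neg (by omega : ¬ ((i:ℕ)+1 = 0))]
  rcases Nat.lt_or_ge (j:ℕ) 1 with hj | hj
  · have hj0 : (j:ℕ) = 0 := by omega
    rw [if_pos hj, hj0]
    simp only [t_ss, t_0s, t_s0, t_1s, t00]
    all_goals first | rfl | (split_ifs <;> first | rfl | (exfalso; first | assumption | omega))
  · rw [if_neg (by omega : ¬ (j:ℕ) < 1)]
    simp only [t_ss, t_0s, t_s0, t_1s, t00]
    all_goals first | rfl | (split_ifs <;> first | rfl | (exfalso; first | assumption | omega))

lemma subV0 (n : ℕ) (p : Fin (n+1)) (hp : (p:ℕ) = 0) :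
    (VM a b c d e (n+1)).submatrix p.succAbove Fin.succ = Mpp a b c d e n := by
  ext i j
  have hs := coe_succAbove' p i; rw [hp] at hs
  simp only [Matrix.submatrix_apply, VM, Mpp, Matrix.of_apply, Fin.val_succ, hs]
  rw [if_neg (by omega : ¬ (i:ℕ) < 0), if_neg (by omega : ¬ ((j:ℕ)+1 = 0)), t_ss]

/-! ### Determinant expansions -/

lemma detV (n : ℕ) : (VM a b c d e (n+1)).det = e * (Mpp a b c d e n).det := by
  rw [Matrix.det_succ_column_zero, Fin.sum_univ_succ]
  rw [subV0 a b c d e n 0 (by simp)]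
  rw [Finset.sum_eq_zero (fun i _ => by
    have hz : (VM a b c d e (n+1)) i.succ 0 = 0 := by
      simp [VM, Fin.val_succ]
    rw [hz]; ring)]
  have h00 : (VM a b c d e (n+1)) 0 0 = e := by simp [VM]
  rw [h00]; simp

lemma detW (n : ℕ) :
    (WM a b c d e (n+2)).det
      = a * (Mpp a b c d e (n+1)).det - c * (VM a b c d e (n+1)).det := by
  rw [Matrix.det_succ_row_zero, Fin.sum_univ_succ, Fin.sum_univ_succ]
  rw [subW0 a b c d e n 0 (by simp), subW1 a b c d e n (Fin.succ 0) (by simp)]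
  rw [Finset.sum_eq_zero (fun j _ => by
    have hz : (WM a b c d e (n+2)) 0 j.succ.succ = 0 := by
      simp [WM, Fin.val_succ]
    rw [hz]; ring)]
  have h00 : (WM a b c d e (n+2)) 0 0 = a := by
    simp [WM]
  have h01 : (WM a b c d e (n+2)) 0 (Fin.succ 0) = c := by
    simp [WM, Fin.val_succ]
  rw [h00, h01]
  simp only [Fin.val_zero, Fin.val_succ, pow_zero, pow_succ, pow_zero]
  ring

lemma detY (n : ℕ) :
    (YM a b c d e (n+2)).det
      = b * (PM a b c d e (n+1)).det - c * (WM a b c d e (n+1)).det := by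
  rw [Matrix.det_succ_row_zero, Fin.sum_univ_succ, Fin.sum_univ_succ]
  rw [subY0 a b c d e n 0 (by simp), subY1 a b c d e n (Fin.succ 0) (by simp)]
  rw [Finset.sum_eq_zero (fun j _ => by
    have hz : (YM a b c d e (n+2)) 0 j.succ.succ = 0 := by
      simp [YM, Fin.val_succ]
    rw [hz]; ring)]
  have h00 : (YM a b c d e (n+2)) 0 0 = b := by
    simp [YM]
  have h01 : (YM a b c d e (n+2)) 0 (Fin.succ 0) = c := by
    simp [YM, Fin.val_succ]
  rw [h00, h01]
  simp only [Fin.val_zero, Fin.val_succ, pow_zero, pow_succ, pow_zero]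
  ring

lemma detP (n : ℕ) :
    (PM a b c d e (n+3)).det
      = b * (Mpp a b c d e (n+2)).det - c * (ZM a b c d e (n+2)).det := by
  rw [Matrix.det_succ_row_zero, Fin.sum_univ_succ, Fin.sum_univ_succ]
  rw [subP0 a b c d e n 0 (by simp), subP1 a b c d e n (Fin.succ 0) (by simp)]
  rw [Finset.sum_eq_zero (fun j _ => by
    have hz : (PM a b c d e (n+3)) 0 j.succ.succ = 0 := by
      simp [PM, Fin.val_succ]
    rw [hz]; ring)]
  have h00 : (PM a b c d e (n+3)) 0 0 = b := by
    simp [PM]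
  have h01 : (PM a b c d e (n+3)) 0 (Fin.succ 0) = c := by
    simp [PM, Fin.val_succ]
  rw [h00, h01]
  simp only [Fin.val_zero, Fin.val_succ, pow_zero, pow_succ, pow_zero]
  ring

lemma detZ (n : ℕ) :
    (ZM a b c d e (n+2)).det
      = d * (Mpp a b c d e (n+1)).det - e * (PM a b c d e (n+1)).det := by
  rw [Matrix.det_succ_column_zero, Fin.sum_univ_succ, Fin.sum_univ_succ]
  rw [subZ0 a b c d e n 0 (by simp), subZ1 a b c d e n (Fin.succ 0) (by simp)]
  rw [Finset.sum_eq_zero (fun i _ => by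
    have hz : (ZM a b c d e (n+2)) i.succ.succ 0 = 0 := by
      simp [ZM, Fin.val_succ]
    rw [hz]; ring)]
  have h00 : (ZM a b c d e (n+2)) 0 0 = d := by
    simp [ZM]
  have h10 : (ZM a b c d e (n+2)) (Fin.succ 0) 0 = e := by
    simp [ZM, Fin.val_succ]
  rw [h00, h10]
  simp only [Fin.val_zero, Fin.val_succ, pow_zero, pow_succ, pow_zero]
  ring

lemma detA (n : ℕ) :
    (Mpp a b c d e (n+3)).det
      = a * (Mpp a b c d e (n+2)).det - d * (PM a b c d e (n+2)).det
        + e * (YM a b c d e (n+2)).det := by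
  rw [Matrix.det_succ_column_zero, Fin.sum_univ_succ, Fin.sum_univ_succ, Fin.sum_univ_succ]
  rw [subA0 a b c d e n 0 (by simp), subA1 a b c d e n (Fin.succ 0) (by simp),
    subA2 a b c d e n (Fin.succ (Fin.succ 0)) (by simp)]
  rw [Finset.sum_eq_zero (fun i _ => by
    have hz : (Mpp a b c d e (n+3)) i.succ.succ.succ 0 = 0 := by
      simp only [Mpp, Matrix.of_apply, Fin.val_succ, Fin.val_zero]
      rw [t_s0]
      all_goals first | rfl | (split_ifs <;> first | rfl | (exfalso; first | assumption | omega))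
    rw [hz]; ring)]
  have h00 : (Mpp a b c d e (n+3)) 0 0 = a := by
    simp only [Mpp, Matrix.of_apply, Fin.val_zero]; exact t00 a b c d e
  have h10 : (Mpp a b c d e (n+3)) (Fin.succ 0) 0 = d := by
    simp only [Mpp, Matrix.of_apply, Fin.val_zero, Fin.val_succ]
    rw [t_s0]
    all_goals first | rfl | (split_ifs <;> first | rfl | (exfalso; first | assumption | omega))
  have h20 : (Mpp a b c d e (n+3)) (Fin.succ 0).succ 0 = e := by
    simp only [Mpp, Matrix.of_apply, Fin.val_zero, Fin.val_succ]
    rw [t_s0]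
    all_goals first | rfl | (split_ifs <;> first | rfl | (exfalso; first | assumption | omega))
  rw [h00, h10, h20]
  simp only [Fin.val_zero, Fin.val_succ, pow_zero, pow_succ, pow_zero]
  ring

lemma Mp_eq (n : ℕ) : Mp a b c d e n = Mpp a b c d e n := rfl

lemma G_eq (n : ℕ) : G a b c d e n = (Mpp a b c d e n).det := rfl

/-- The coupled recurrence for `p`. -/
lemma recP (n : ℕ) :
    (PM a b c d e (n+3)).det
      = b * G a b c d e (n+2) - c*d * G a b c d e (n+1)
        + c*e * (PM a b c d e (n+1)).det := by
  rw [detP, detZ, G_eq, G_eq]; ring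

/-- The coupled recurrence for `G`. -/
lemma recG (n : ℕ) :
    G a b c d e (n+5)
      = a * G a b c d e (n+4) - d * (PM a b c d e (n+4)).det
        + b*e * (PM a b c d e (n+3)).det - a*c*e * G a b c d e (n+2)
        + c^2*e^2 * G a b c d e (n+1) := by
  have h1 : G a b c d e (n+5) = (Mpp a b c d e (n+2+3)).det := rfl
  rw [h1, detA]
  have h2 : (Mpp a b c d e (n+2+2)).det = G a b c d e (n+4) := rfl
  have h3 : (PM a b c d e (n+2+2)).det = (PM a b c d e (n+4)).det := rfl
  rw [h2, h3, detY]
  have h4 : (PM a b c d e (n+2+1)).det = (PM a b c d e (n+3)).det := rfl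
  rw [h4, detW, detV]
  have h5 : (Mpp a b c d e (n+2)).det = G a b c d e (n+2) := rfl
  have h6 : (Mpp a b c d e (n+1)).det = G a b c d e (n+1) := rfl
  rw [h5]
  have h7 : (Mpp a b c d e (n+2+1)).det = G a b c d e (n+3) := rfl
  rw [h6]
  ring

end PentAux

lemma Yiter {K : Type*} : ∀ (k : ℕ) (s : ℕ → K) (m : ℕ), (Y^[k] s) m = s (m - k) := by
  intro k
  induction k with
  | zero => intro s m; simp
  | succ k ih =>
    intro s m
    rw [Function.iterate_succ_apply, ih (Y s) m]
    show s (m - k - 1) = s (m - (k+1))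
    congr 1 <;> omega

/-- The sequence `G` of pentadiagonal Toeplitz determinants is annihilated, for
`n ≥ 7`, by the shift-polynomial
`1 - a y + (bd - ce) y² + (2ace - b²e - cd²) y³ + ce(bd - ce) y⁴ - ac²e² y⁵ + c³e³ y⁶`
(with `y` the backward shift `y G_n = G_{n-1}`). -/
theorem stmt_19 {K : Type*} [CommRing K] (a b c d e : K) :
    ∀ n : ℕ, 7 ≤ n →
      G a b c d e n
        - a * (Y (G a b c d e)) n
        + (b * d - c * e) * (Y^[2] (G a b c d e)) n
        + (2 * a * c * e - b ^ 2 * e - c * d ^ 2) * (Y^[3] (G a b c d e)) n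
        + c * e * (b * d - c * e) * (Y^[4] (G a b c d e)) n
        - a * c ^ 2 * e ^ 2 * (Y^[5] (G a b c d e)) n
        + c ^ 3 * e ^ 3 * (Y^[6] (G a b c d e)) n = 0 := by
  intro n hn
  obtain ⟨m, rfl⟩ : ∃ m, n = m + 7 := ⟨n - 7, by omega⟩
  simp only [Yiter, Y]
  rw [show m+7-1 = m+6 from by omega, show m+7-2 = m+5 from by omega,
      show m+7-3 = m+4 from by omega, show m+7-4 = m+3 from by omega,
      show m+7-5 = m+2 from by omega, show m+7-6 = m+1 from by omega]
  have E7 := recG a b c d e (m+2)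
  rw [show m+2+5 = m+7 from by omega, show m+2+4 = m+6 from by omega,
      show m+2+3 = m+5 from by omega, show m+2+2 = m+4 from by omega,
      show m+2+1 = m+3 from by omega] at E7
  have E5 := recG a b c d e m
  have P6 := recP a b c d e (m+3)
  rw [show m+3+3 = m+6 from by omega, show m+3+2 = m+5 from by omega,
      show m+3+1 = m+4 from by omega] at P6
  have P5 := recP a b c d e (m+2)
  rw [show m+2+3 = m+5 from by omega, show m+2+2 = m+4 from by omega,
      show m+2+1 = m+3 from by omega] at P5
  linear_combination E7 - (c*e)*E5 - d*P6 + b*e*P5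
end
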